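/- arXiv:math/0412094 — 2 statements merged into one kernel-verified Lean document; each statement's English description precedes it below -/
import Mathlib

section
/- If h: ℝ → ℂ has asymptotic expansion h(x) ≈ Σ a_n x^n as x → 0 (meaning for each N, h(x) − Σ_{n<N} a_n x^n = O(x^N) as x → 0), and f(x) = (1/√(2π)) ∫_{-∞}^{∞} e^{-y²/2} h(xy) dy converges for all x in a neighborhood of 0, then f has asymptotic expansion f(x) ≈ Σ Ch_n a_n x^n as x → 0, where Ch_n = (1/√(2π)) ∫ e^{-y²/2} y^n dy. -/
open Real Topology Filter MeasureTheory
open Asymptotics Set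

set_option maxHeartbeats 1000000

lemma mom_int {b : ℝ} (hb : 0 < b) (n : ℕ) :
    Integrable fun y : ℝ => y ^ n * Real.exp (-b * y ^ 2) := by
  have h := integrable_rpow_mul_exp_neg_mul_sq hb (s := n)
    (neg_one_lt_zero.trans_le (Nat.cast_nonneg n))
  simp_rw [Real.rpow_natCast] at h
  exact h

lemma mom_int_abs {b : ℝ} (hb : 0 < b) (n : ℕ) :
    Integrable fun y : ℝ => Real.exp (-b * y ^ 2) * |y| ^ n := by
  have h := (mom_int hb n).abs
  simpa [abs_mul, Real.abs_exp, abs_pow, mul_comm] using h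

lemma exp_decay_bigO {c : ℝ} (hc : 0 < c) (N : ℕ) :
    (fun x : ℝ => Real.exp (-c / x ^ 2) * |x|⁻¹) =O[𝓝[≠] (0 : ℝ)] fun x => x ^ N := by
  have h1 : Tendsto (fun x : ℝ => (x ^ 2)⁻¹) (𝓝[≠] (0 : ℝ)) atTop := by
    apply Filter.Tendsto.inv_tendsto_nhdsGT_zero
    apply tendsto_nhdsWithin_of_tendsto_nhds_of_eventually_within
    · simpa using ((continuous_pow 2).tendsto (0 : ℝ)).mono_left nhdsWithin_le_nhds
    · filter_upwards [self_mem_nhdsWithin] with x hx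
      have hx' : x ≠ 0 := hx
      exact Set.mem_Ioi.2 (by positivity)
  have h2 : Tendsto (fun t : ℝ => t ^ (N + 1) * Real.exp (-(c * t))) atTop (𝓝 0) := by
    have hb := (tendsto_pow_mul_exp_neg_atTop_nhds_zero (N + 1)).comp
      (tendsto_id.const_mul_atTop hc)
    have hb2 := hb.const_mul ((c : ℝ) ^ (N + 1))⁻¹
    simp only [Function.comp_def, id, mul_zero] at hb2
    have heq : (fun t : ℝ => (c ^ (N + 1))⁻¹ * ((c * t) ^ (N + 1) * Real.exp (-(c * t))))
        = fun t : ℝ => t ^ (N + 1) * Real.exp (-(c * t)) := by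
      funext t; field_simp [mul_pow]; ring
    rwa [heq] at hb2
  have h3 : Tendsto (fun x : ℝ => ((x ^ 2)⁻¹) ^ (N + 1) * Real.exp (-c / x ^ 2))
      (𝓝[≠] (0 : ℝ)) (𝓝 0) := by
    have := h2.comp h1
    simp only [Function.comp_def] at this
    convert this using 2 with x
    rw [neg_div, div_eq_mul_inv]
  have hev : ∀ᶠ x in 𝓝[≠] (0 : ℝ),
      ((x ^ 2)⁻¹) ^ (N + 1) * Real.exp (-c / x ^ 2) ≤ 1 :=
    h3.eventually (eventually_le_nhds one_pos)
  have hsmall : ∀ᶠ x : ℝ in 𝓝[≠] (0 : ℝ), |x| ≤ 1 := by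
    have h : ∀ᶠ x : ℝ in 𝓝 (0 : ℝ), |x| ≤ 1 := by
      filter_upwards [Metric.ball_mem_nhds (0 : ℝ) one_pos] with x hx
      rw [Metric.mem_ball, Real.dist_eq, sub_zero] at hx
      exact hx.le
    exact h.filter_mono nhdsWithin_le_nhds
  rw [isBigO_iff]
  refine ⟨1, ?_⟩
  filter_upwards [hev, hsmall, self_mem_nhdsWithin] with x hx1 hx2 hx0
  have hx0' : (x : ℝ) ≠ 0 := hx0
  have habs : (0:ℝ) < |x| := abs_pos.2 hx0'
  have key : |x|⁻¹ ≤ ((x ^ 2)⁻¹) ^ (N + 1) * |x| ^ N := by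
    have e1 : ((x ^ 2)⁻¹) ^ (N + 1) = (|x| ^ (2 * (N + 1)))⁻¹ := by
      rw [← sq_abs, inv_pow, ← pow_mul]
    rw [e1, ← div_eq_inv_mul, le_div_iff₀ (pow_pos habs _)]
    rw [show (2 * (N + 1)) = 1 + (2 * N + 1) by ring, pow_add, pow_one, ← mul_assoc,
      inv_mul_cancel₀ habs.ne', one_mul]
    exact pow_le_pow_of_le_one habs.le hx2 (by omega)
  have hnorm : ‖Real.exp (-c / x ^ 2) * |x|⁻¹‖ ≤ 1 * ‖x ^ N‖ := by
    rw [Real.norm_eq_abs, Real.norm_eq_abs, abs_pow,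
      abs_of_nonneg (by positivity : (0:ℝ) ≤ Real.exp (-c / x ^ 2) * |x|⁻¹)]
    calc Real.exp (-c / x ^ 2) * |x|⁻¹
        ≤ Real.exp (-c / x ^ 2) * (((x ^ 2)⁻¹) ^ (N + 1) * |x| ^ N) :=
          mul_le_mul_of_nonneg_left key (Real.exp_pos _).le
      _ = ((x ^ 2)⁻¹ ^ (N + 1) * Real.exp (-c / x ^ 2)) * |x| ^ N := by ring
      _ ≤ 1 * |x| ^ N := mul_le_mul_of_nonneg_right hx1 (pow_nonneg (abs_nonneg x) N)
  exact hnorm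

/-- The `n`-th Gaussian moment `Ch_n = (1/√(2π)) ∫ e^{-y²/2} yⁿ dy`,
equal to `(n−1)!!` for even `n` and `0` for odd `n`. -/
noncomputable def Ch (n : ℕ) : ℝ :=
  (1 / Real.sqrt (2 * π)) * ∫ y : ℝ, Real.exp (-y ^ 2 / 2) * y ^ n

/-- If `h : ℝ → ℂ` has asymptotic expansion `Σ aₙ xⁿ` as `x → 0` and
`f(x) = (1/√(2π)) ∫ e^{-y²/2} h(xy) dy` converges for all `x` in a neighborhood
of `0`, then `f` has asymptotic expansion `Σ Chₙ aₙ xⁿ` as `x → 0`. -/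
theorem exchange_integral_asymptotic (h : ℝ → ℂ) (a : ℕ → ℂ)
    (hexp : ∀ N : ℕ,
      (fun x : ℝ => h x - ∑ n ∈ Finset.range N, a n * (x : ℂ) ^ n)
        =O[𝓝[≠] (0 : ℝ)] fun x : ℝ => x ^ N)
    (hint : ∀ᶠ x in 𝓝 (0 : ℝ),
      Integrable fun y : ℝ => Real.exp (-y ^ 2 / 2) • h (x * y)) :
    ∀ N : ℕ,
      (fun x : ℝ =>
          (1 / Real.sqrt (2 * π)) • (∫ y : ℝ, Real.exp (-y ^ 2 / 2) • h (x * y)) -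
            ∑ n ∈ Finset.range N, (Ch n : ℂ) * a n * (x : ℂ) ^ n)
        =O[𝓝[≠] (0 : ℝ)] fun x : ℝ => x ^ N := by
  intro N
  -- extract the expansion constant
  obtain ⟨C₀, hC₀⟩ := isBigO_iff.mp (hexp N)
  rw [eventually_nhdsWithin_iff, Metric.eventually_nhds_iff] at hC₀
  obtain ⟨δ, hδ, hCb⟩ := hC₀
  set C := max C₀ 0 with hCdef
  have hCnn : 0 ≤ C := le_max_right _ _
  have hCb' : ∀ t : ℝ, t ≠ 0 → |t| < δ →
      ‖h t - ∑ n ∈ Finset.range N, a n * (t : ℂ) ^ n‖ ≤ C * |t| ^ N := by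
    intro t ht hlt
    have h1 := hCb (by simpa [Real.dist_eq] using hlt) (by simpa using ht)
    calc ‖h t - ∑ n ∈ Finset.range N, a n * (t : ℂ) ^ n‖ ≤ C₀ * ‖t ^ N‖ := h1
      _ ≤ C * |t| ^ N := by
          rw [Real.norm_eq_abs, abs_pow]
          exact mul_le_mul_of_nonneg_right (le_max_left _ _) (by positivity)
  -- integrability near 0
  rw [Metric.eventually_nhds_iff] at hint
  obtain ⟨ε, hε, hIb⟩ := hint
  have hI : ∀ x : ℝ, |x| < ε → Integrable fun y : ℝ => Real.exp (-y ^ 2 / 2) • h (x * y) :=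
    fun x hx => hIb (by simpa [Real.dist_eq] using hx)
  set x₀ : ℝ := ε / 2 with hx₀def
  have hx₀ : 0 < x₀ := by positivity
  have hH : Integrable fun y : ℝ => Real.exp (-y ^ 2 / 2) • h (x₀ * y) :=
    hI x₀ (by rw [abs_of_pos hx₀, hx₀def]; linarith)
  -- gaussian moments integrable
  have hmom2 : ∀ n : ℕ, Integrable fun y : ℝ => Real.exp (-y ^ 2 / 2) * |y| ^ n := by
    intro n
    have e : ∀ y : ℝ, -y ^ 2 / 2 = -(1/2 : ℝ) * y ^ 2 := fun y => by ring
    simp_rw [e]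
    exact mom_int_abs (by norm_num) n
  have hmom2' : ∀ n : ℕ, Integrable fun y : ℝ => Real.exp (-y ^ 2 / 2) * y ^ n := by
    intro n
    have e : ∀ y : ℝ, Real.exp (-y ^ 2 / 2) * y ^ n = y ^ n * Real.exp (-(1/2 : ℝ) * y ^ 2) :=
      fun y => by rw [mul_comm]; congr 1; ring_nf
    simp_rw [e]
    exact mom_int (by norm_num) n
  have hmom4 : ∀ n : ℕ, Integrable fun y : ℝ => Real.exp (-y ^ 2 / 4) * |y| ^ n := by
    intro n
    have e : ∀ y : ℝ, -y ^ 2 / 4 = -(1/4 : ℝ) * y ^ 2 := fun y => by ring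
    simp_rw [e]
    exact mom_int_abs (by norm_num) n
  -- polynomial terms integrable
  have hPn : ∀ (x : ℝ) (n : ℕ),
      Integrable fun y : ℝ => Real.exp (-y ^ 2 / 2) • (a n * ((x * y : ℝ) : ℂ) ^ n) := by
    intro x n
    have e : ∀ y : ℝ, Real.exp (-y ^ 2 / 2) • (a n * ((x * y : ℝ) : ℂ) ^ n)
        = (x ^ n * (Real.exp (-y ^ 2 / 2) * y ^ n)) • a n := by
      intro y
      rw [Complex.real_smul, Complex.real_smul]
      push_cast
      ring
    simp_rw [e]
    exact (((hmom2' n).const_mul (x ^ n))).smul_const (a n)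
  -- the remainder function g
  set g : ℝ → ℝ → ℂ :=
    fun x y => h (x * y) - ∑ n ∈ Finset.range N, a n * ((x * y : ℝ) : ℂ) ^ n with hgdef
  have hsplit : ∀ x : ℝ, (fun y : ℝ => Real.exp (-y ^ 2 / 2) • g x y)
      = fun y : ℝ => Real.exp (-y ^ 2 / 2) • h (x * y)
          - ∑ n ∈ Finset.range N, Real.exp (-y ^ 2 / 2) • (a n * ((x * y : ℝ) : ℂ) ^ n) := by
    intro x; funext y
    rw [hgdef]
    simp [smul_sub, Finset.smul_sum]
  have hgint : ∀ x : ℝ, |x| < ε →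
      Integrable fun y : ℝ => Real.exp (-y ^ 2 / 2) • g x y := by
    intro x hx
    rw [hsplit x]
    exact (hI x hx).sub (integrable_finset_sum _ fun n _ => hPn x n)
  -- key algebraic identity
  have hkey : ∀ x : ℝ, |x| < ε →
      (1 / Real.sqrt (2 * π)) • (∫ y : ℝ, Real.exp (-y ^ 2 / 2) • h (x * y)) -
          ∑ n ∈ Finset.range N, (Ch n : ℂ) * a n * (x : ℂ) ^ n
        = (1 / Real.sqrt (2 * π)) • ∫ y : ℝ, Real.exp (-y ^ 2 / 2) • g x y := by
    intro x hx
    have e1 : ∫ y : ℝ, Real.exp (-y ^ 2 / 2) • g x y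
        = (∫ y : ℝ, Real.exp (-y ^ 2 / 2) • h (x * y))
          - ∑ n ∈ Finset.range N,
              ∫ y : ℝ, Real.exp (-y ^ 2 / 2) • (a n * ((x * y : ℝ) : ℂ) ^ n) := by
      rw [hsplit x, integral_sub (hI x hx) (integrable_finset_sum _ fun n _ => hPn x n),
        integral_finset_sum _ fun n _ => hPn x n]
    have e2 : ∀ n : ℕ, ∫ y : ℝ, Real.exp (-y ^ 2 / 2) • (a n * ((x * y : ℝ) : ℂ) ^ n)
        = (a n * (x : ℂ) ^ n) * ((∫ y : ℝ, Real.exp (-y ^ 2 / 2) * y ^ n : ℝ) : ℂ) := by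
      intro n
      have e : ∀ y : ℝ, Real.exp (-y ^ 2 / 2) • (a n * ((x * y : ℝ) : ℂ) ^ n)
          = (a n * (x : ℂ) ^ n) * ((Real.exp (-y ^ 2 / 2) * y ^ n : ℝ) : ℂ) := by
        intro y
        rw [Complex.real_smul]
        push_cast
        ring
      simp_rw [e]
      rw [MeasureTheory.integral_const_mul]
      congr 1
      exact integral_ofReal
    rw [e1, smul_sub]
    congr 1
    rw [Finset.smul_sum]
    refine Finset.sum_congr rfl fun n _ => ?_
    rw [e2 n, Ch, Complex.real_smul]
    push_cast
    ring
  -- constants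
  set MN : ℝ := ∫ y : ℝ, Real.exp (-y ^ 2 / 2) * |y| ^ N with hMNdef
  have hMN : 0 ≤ MN := integral_nonneg fun y => by positivity
  set MH : ℝ := ∫ y : ℝ, ‖Real.exp (-y ^ 2 / 2) • h (x₀ * y)‖ with hMHdef
  have hMH : 0 ≤ MH := integral_nonneg fun y => norm_nonneg _
  have hM4 : ∀ n : ℕ, 0 ≤ ∫ y : ℝ, Real.exp (-y ^ 2 / 4) * |y| ^ n :=
    fun n => integral_nonneg fun y => by positivity
  set A0 : ℝ := ∑ n ∈ Finset.range N, ‖a n‖ * ∫ y : ℝ, Real.exp (-y ^ 2 / 4) * |y| ^ n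
    with hA0def
  have hA0 : 0 ≤ A0 :=
    Finset.sum_nonneg fun n _ => mul_nonneg (norm_nonneg _) (hM4 n)
  set D : ℝ := x₀ * MH + A0 with hDdef
  have hD : 0 ≤ D := by positivity
  set E : ℝ → ℝ := fun x => Real.exp (-(δ ^ 2 / 4) / x ^ 2) with hEdef
  have hE : ∀ x : ℝ, 0 ≤ E x := fun x => (Real.exp_pos _).le
  set r : ℝ := min (min (x₀ / 2) 1) ε with hrdef
  have hr : 0 < r := lt_min (lt_min (by positivity) one_pos) hε
  -- the central estimate
  have hbound : ∀ x : ℝ, x ≠ 0 → |x| < r →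
      ‖∫ y : ℝ, Real.exp (-y ^ 2 / 2) • g x y‖
        ≤ C * MN * |x| ^ N + D * (E x * |x|⁻¹) := by
    intro x hx0 hxr
    have hax : 0 < |x| := abs_pos.2 hx0
    have hx1 : |x| ≤ 1 :=
      le_of_lt (lt_of_lt_of_le hxr ((min_le_left _ _).trans (min_le_right _ _)))
    have hxε : |x| < ε := lt_of_lt_of_le hxr (min_le_right _ _)
    have hxx₀ : |x| < x₀ / 2 :=
      lt_of_lt_of_le hxr ((min_le_left _ _).trans (min_le_left _ _))
    set R : ℝ := δ / |x| with hRdef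
    have hR : 0 < R := by positivity
    set S : Set ℝ := {y : ℝ | R ≤ |y|} with hSdef
    have hS : MeasurableSet S := (isClosed_le continuous_const continuous_abs).measurableSet
    set c : ℝ := x / x₀ with hcdef
    have hc0 : c ≠ 0 := div_ne_zero hx0 hx₀.ne'
    have hc2 : c ^ 2 ≤ 1 / 4 := by
      have h1 : |c| ≤ 1 / 2 := by
        rw [hcdef, abs_div, abs_of_pos hx₀, div_le_iff₀ hx₀]
        linarith
      calc c ^ 2 = |c| ^ 2 := (sq_abs c).symm
        _ ≤ (1 / 2) ^ 2 := pow_le_pow_left₀ (abs_nonneg c) h1 2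
        _ = 1 / 4 := by norm_num
    set φ1 : ℝ → ℝ := fun y => (C * |x| ^ N) * (Real.exp (-y ^ 2 / 2) * |y| ^ N) with hφ1def
    set φ2 : ℝ → ℝ := S.indicator (fun y => Real.exp (-y ^ 2 / 2) * ‖h (x * y)‖) with hφ2def
    set φ3 : ℝ → ℝ := S.indicator
      (fun y => Real.exp (-y ^ 2 / 2) * ∑ n ∈ Finset.range N, ‖a n‖ * |x * y| ^ n) with hφ3def
    have hφ1int : Integrable φ1 := (hmom2 N).const_mul _
    have hbase2 : Integrable fun y : ℝ => Real.exp (-y ^ 2 / 2) * ‖h (x * y)‖ := by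
      refine ((hI x hxε).norm).congr (Eventually.of_forall fun y => ?_)
      show ‖Real.exp (-y ^ 2 / 2) • h (x * y)‖ = Real.exp (-y ^ 2 / 2) * ‖h (x * y)‖
      rw [norm_smul, Real.norm_eq_abs, abs_of_nonneg (Real.exp_nonneg _)]
    have hφ2int : Integrable φ2 := hbase2.indicator hS
    have hbase3 : Integrable fun y : ℝ =>
        Real.exp (-y ^ 2 / 2) * ∑ n ∈ Finset.range N, ‖a n‖ * |x * y| ^ n := by
      have e : (fun y : ℝ =>
            Real.exp (-y ^ 2 / 2) * ∑ n ∈ Finset.range N, ‖a n‖ * |x * y| ^ n)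
          = fun y : ℝ => ∑ n ∈ Finset.range N,
              (‖a n‖ * |x| ^ n) * (Real.exp (-y ^ 2 / 2) * |y| ^ n) := by
        funext y
        rw [Finset.mul_sum]
        refine Finset.sum_congr rfl fun n _ => ?_
        rw [abs_mul, mul_pow]
        ring
      rw [e]
      exact integrable_finset_sum _ fun n _ => (hmom2 n).const_mul _
    have hφ3int : Integrable φ3 := hbase3.indicator hS
    have h0ae : ∀ᵐ y : ℝ, y ≠ 0 :=
      compl_mem_ae_iff.mpr (measure_singleton 0)
    have hae : ∀ᵐ y : ℝ, ‖Real.exp (-y ^ 2 / 2) • g x y‖ ≤ φ1 y + (φ2 y + φ3 y) := by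
      filter_upwards [h0ae] with y hy
      have hn : ‖Real.exp (-y ^ 2 / 2) • g x y‖ = Real.exp (-y ^ 2 / 2) * ‖g x y‖ := by
        rw [norm_smul, Real.norm_eq_abs, abs_of_nonneg (Real.exp_nonneg _)]
      have hφ1nn : 0 ≤ φ1 y := by
        rw [hφ1def]
        positivity
      rcases lt_or_ge |y| R with hyR | hyR
      · have hxy0 : x * y ≠ 0 := mul_ne_zero hx0 hy
        have hxyδ : |x * y| < δ := by
          rw [abs_mul]
          calc |x| * |y| < |x| * R := mul_lt_mul_of_pos_left hyR hax
            _ = δ := by rw [hRdef]; field_simp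
        have hgb : ‖g x y‖ ≤ C * |x * y| ^ N := hCb' (x * y) hxy0 hxyδ
        have hnotS : y ∉ S := by
          rw [hSdef]
          simpa using not_le.2 hyR
        have h2z : φ2 y = 0 := by rw [hφ2def]; exact Set.indicator_of_notMem hnotS _
        have h3z : φ3 y = 0 := by rw [hφ3def]; exact Set.indicator_of_notMem hnotS _
        rw [h2z, h3z, add_zero, add_zero, hn, hφ1def]
        calc Real.exp (-y ^ 2 / 2) * ‖g x y‖
            ≤ Real.exp (-y ^ 2 / 2) * (C * |x * y| ^ N) :=
              mul_le_mul_of_nonneg_left hgb (Real.exp_nonneg _)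
          _ = (C * |x| ^ N) * (Real.exp (-y ^ 2 / 2) * |y| ^ N) := by
              rw [abs_mul, mul_pow]; ring
      · have hyS : y ∈ S := by rw [hSdef]; exact hyR
        have hgb : ‖g x y‖ ≤ ‖h (x * y)‖ + ∑ n ∈ Finset.range N, ‖a n‖ * |x * y| ^ n := by
          refine (norm_sub_le _ _).trans (add_le_add_right ?_ _)
          calc ‖∑ n ∈ Finset.range N, a n * ((x * y : ℝ) : ℂ) ^ n‖
              ≤ ∑ n ∈ Finset.range N, ‖a n * ((x * y : ℝ) : ℂ) ^ n‖ := norm_sum_le _ _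
            _ = ∑ n ∈ Finset.range N, ‖a n‖ * |x * y| ^ n := by
                refine Finset.sum_congr rfl fun n _ => ?_
                rw [norm_mul, norm_pow, Complex.norm_real, Real.norm_eq_abs]
        have h2v : φ2 y = Real.exp (-y ^ 2 / 2) * ‖h (x * y)‖ := by
          rw [hφ2def]; exact Set.indicator_of_mem hyS _
        have h3v : φ3 y
            = Real.exp (-y ^ 2 / 2) * ∑ n ∈ Finset.range N, ‖a n‖ * |x * y| ^ n := by
          rw [hφ3def]; exact Set.indicator_of_mem hyS _
        rw [hn, h2v, h3v]
        calc Real.exp (-y ^ 2 / 2) * ‖g x y‖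
            ≤ Real.exp (-y ^ 2 / 2)
                * (‖h (x * y)‖ + ∑ n ∈ Finset.range N, ‖a n‖ * |x * y| ^ n) :=
              mul_le_mul_of_nonneg_left hgb (Real.exp_nonneg _)
          _ = Real.exp (-y ^ 2 / 2) * ‖h (x * y)‖
                + Real.exp (-y ^ 2 / 2) * ∑ n ∈ Finset.range N, ‖a n‖ * |x * y| ^ n := by
              ring
          _ ≤ φ1 y + (Real.exp (-y ^ 2 / 2) * ‖h (x * y)‖
                + Real.exp (-y ^ 2 / 2) * ∑ n ∈ Finset.range N, ‖a n‖ * |x * y| ^ n) :=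
              le_add_of_nonneg_left hφ1nn
    have hint1 : ∫ y : ℝ, φ1 y = C * |x| ^ N * MN := by
      rw [hφ1def, MeasureTheory.integral_const_mul, hMNdef]
    have hERdef : Real.exp (-(R ^ 2 / 4)) = E x := by
      rw [hEdef]
      congr 1
      rw [hRdef, div_pow, sq_abs]
      ring
    have hy2R : ∀ y : ℝ, y ∈ S → R ^ 2 ≤ y ^ 2 := by
      intro y hy
      have : R ≤ |y| := hy
      calc R ^ 2 ≤ |y| ^ 2 := pow_le_pow_left₀ hR.le this 2
        _ = y ^ 2 := sq_abs y
    -- bound on the h-tail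
    set ψ2 : ℝ → ℝ := fun y => Real.exp (-(R ^ 2 / 4))
        * ‖Real.exp (-(c * y) ^ 2 / 2) • h (x₀ * (c * y))‖ with hψ2def
    have hψ2int : Integrable ψ2 := ((hH.comp_mul_left' hc0).norm).const_mul _
    have hφ2le : ∀ y : ℝ, φ2 y ≤ ψ2 y := by
      intro y
      by_cases hy : y ∈ S
      · have hx₀c : x₀ * (c * y) = x * y := by
          rw [hcdef]; field_simp
        have hnrm : ‖Real.exp (-(c * y) ^ 2 / 2) • h (x₀ * (c * y))‖
            = Real.exp (-(c * y) ^ 2 / 2) * ‖h (x * y)‖ := by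
          rw [hx₀c, norm_smul, Real.norm_eq_abs, abs_of_nonneg (Real.exp_nonneg _)]
        rw [hφ2def]
        rw [Set.indicator_of_mem hy, hψ2def]
        show Real.exp (-y ^ 2 / 2) * ‖h (x * y)‖
          ≤ Real.exp (-(R ^ 2 / 4)) * ‖Real.exp (-(c * y) ^ 2 / 2) • h (x₀ * (c * y))‖
        rw [hnrm, ← mul_assoc, ← Real.exp_add]
        refine mul_le_mul_of_nonneg_right ?_ (norm_nonneg _)
        rw [Real.exp_le_exp]
        have hy2 := hy2R y hy
        nlinarith [mul_le_mul_of_nonneg_right hc2 (sq_nonneg y), sq_nonneg y]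
      · rw [hφ2def, Set.indicator_of_notMem hy]
        rw [hψ2def]
        positivity
    have hint2 : ∫ y : ℝ, φ2 y ≤ E x * ((x₀ * |x|⁻¹) * MH) := by
      have hsub : (∫ y : ℝ, ‖Real.exp (-(c * y) ^ 2 / 2) • h (x₀ * (c * y))‖)
          = |c⁻¹| • ∫ z : ℝ, ‖Real.exp (-z ^ 2 / 2) • h (x₀ * z)‖ :=
        MeasureTheory.Measure.integral_comp_mul_left
          (fun z : ℝ => ‖Real.exp (-z ^ 2 / 2) • h (x₀ * z)‖) c
      have hcinv : |c⁻¹| = x₀ * |x|⁻¹ := by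
        rw [hcdef]
        rw [show (x / x₀)⁻¹ = x₀ / x by field_simp]
        rw [abs_div, abs_of_pos hx₀]
        ring
      calc ∫ y : ℝ, φ2 y ≤ ∫ y : ℝ, ψ2 y := integral_mono hφ2int hψ2int hφ2le
        _ = Real.exp (-(R ^ 2 / 4))
            * ∫ y : ℝ, ‖Real.exp (-(c * y) ^ 2 / 2) • h (x₀ * (c * y))‖ := by
            rw [hψ2def, MeasureTheory.integral_const_mul]
        _ = E x * ((x₀ * |x|⁻¹) * MH) := by
            rw [hsub, hcinv, smul_eq_mul, hERdef, hMHdef]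
    -- bound on the polynomial tail
    set ψ3 : ℝ → ℝ := fun y => ∑ n ∈ Finset.range N,
        (Real.exp (-(R ^ 2 / 4)) * (‖a n‖ * |x| ^ n)) * (Real.exp (-y ^ 2 / 4) * |y| ^ n)
      with hψ3def
    have hψ3int : Integrable ψ3 :=
      integrable_finset_sum _ fun n _ => (hmom4 n).const_mul _
    have hψ3y : ∀ y : ℝ, ψ3 y = Real.exp (-(R ^ 2 / 4))
        * (Real.exp (-y ^ 2 / 4) * ∑ n ∈ Finset.range N, ‖a n‖ * |x * y| ^ n) := by
      intro y
      rw [hψ3def, Finset.mul_sum, Finset.mul_sum]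
      refine Finset.sum_congr rfl fun n _ => ?_
      rw [abs_mul, mul_pow]
      ring
    have hφ3le : ∀ y : ℝ, φ3 y ≤ ψ3 y := by
      intro y
      rw [hψ3y y]
      by_cases hy : y ∈ S
      · rw [hφ3def, Set.indicator_of_mem hy]
        have hy2 := hy2R y hy
        rw [← mul_assoc, ← Real.exp_add]
        refine mul_le_mul_of_nonneg_right ?_
          (Finset.sum_nonneg fun n _ => by positivity)
        rw [Real.exp_le_exp]
        nlinarith
      · rw [hφ3def, Set.indicator_of_notMem hy]
        have h1 : (0:ℝ) ≤ Real.exp (-y ^ 2 / 4)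
            * ∑ n ∈ Finset.range N, ‖a n‖ * |x * y| ^ n :=
          mul_nonneg (Real.exp_nonneg _) (Finset.sum_nonneg fun n _ => by positivity)
        positivity
    have hint3 : ∫ y : ℝ, φ3 y ≤ E x * A0 := by
      calc ∫ y : ℝ, φ3 y ≤ ∫ y : ℝ, ψ3 y := integral_mono hφ3int hψ3int hφ3le
        _ = ∑ n ∈ Finset.range N, (Real.exp (-(R ^ 2 / 4)) * (‖a n‖ * |x| ^ n))
            * ∫ y : ℝ, Real.exp (-y ^ 2 / 4) * |y| ^ n := by
            rw [hψ3def, integral_finset_sum _ fun n _ => (hmom4 n).const_mul _]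
            exact Finset.sum_congr rfl fun n _ => MeasureTheory.integral_const_mul _ _
        _ ≤ E x * A0 := by
            rw [hA0def, Finset.mul_sum]
            refine Finset.sum_le_sum fun n _ => ?_
            rw [hERdef, mul_assoc]
            refine mul_le_mul_of_nonneg_left ?_ (hE x)
            refine mul_le_mul_of_nonneg_right ?_ (hM4 n)
            exact mul_le_of_le_one_right (norm_nonneg _)
              (pow_le_one₀ (abs_nonneg x) hx1)
    -- combine
    have hinv1 : 1 ≤ |x|⁻¹ := (one_le_inv₀ hax).2 hx1
    calc ‖∫ y : ℝ, Real.exp (-y ^ 2 / 2) • g x y‖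
        ≤ ∫ y : ℝ, ‖Real.exp (-y ^ 2 / 2) • g x y‖ := norm_integral_le_integral_norm _
      _ ≤ ∫ y : ℝ, (φ1 y + (φ2 y + φ3 y)) :=
          integral_mono_ae (hgint x hxε).norm (hφ1int.add (hφ2int.add hφ3int)) hae
      _ = (∫ y : ℝ, φ1 y) + ((∫ y : ℝ, φ2 y) + ∫ y : ℝ, φ3 y) := by
          rw [integral_add hφ1int ((hφ2int.add hφ3int) : Integrable fun y => φ2 y + φ3 y),
            integral_add hφ2int hφ3int]
      _ ≤ C * |x| ^ N * MN + (E x * ((x₀ * |x|⁻¹) * MH) + E x * A0) :=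
          add_le_add (le_of_eq hint1) (add_le_add hint2 hint3)
      _ ≤ C * MN * |x| ^ N + D * (E x * |x|⁻¹) := by
          rw [hDdef]
          nlinarith [le_mul_of_one_le_right (mul_nonneg hA0 (hE x)) hinv1,
            mul_nonneg hA0 (hE x)]
  -- conclusion
  have hmem : ∀ᶠ x in 𝓝[≠] (0:ℝ), x ≠ 0 ∧ |x| < r := by
    have h1 : ∀ᶠ x : ℝ in 𝓝 (0:ℝ), |x| < r := by
      filter_upwards [Metric.ball_mem_nhds (0:ℝ) hr] with x hx
      rwa [Metric.mem_ball, Real.dist_eq, sub_zero] at hx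
    filter_upwards [self_mem_nhdsWithin, h1.filter_mono nhdsWithin_le_nhds] with x hx hx'
    exact ⟨hx, hx'⟩
  have hΦnn : ∀ x : ℝ, 0 ≤ C * MN * |x| ^ N + D * (E x * |x|⁻¹) := fun x =>
    add_nonneg (by positivity)
      (mul_nonneg hD (mul_nonneg (hE x) (inv_nonneg.2 (abs_nonneg _))))
  have h1 : (fun x : ℝ =>
        (1 / Real.sqrt (2 * π)) • (∫ y : ℝ, Real.exp (-y ^ 2 / 2) • h (x * y)) -
          ∑ n ∈ Finset.range N, (Ch n : ℂ) * a n * (x : ℂ) ^ n)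
      =O[𝓝[≠] (0:ℝ)] fun x : ℝ => C * MN * |x| ^ N + D * (E x * |x|⁻¹) := by
    rw [isBigO_iff]
    refine ⟨1 / Real.sqrt (2 * π), ?_⟩
    filter_upwards [hmem] with x hx
    obtain ⟨hx0, hxr⟩ := hx
    rw [hkey x (lt_of_lt_of_le hxr (min_le_right _ _)), norm_smul]
    rw [Real.norm_eq_abs (C * MN * |x| ^ N + D * (E x * |x|⁻¹)),
      abs_of_nonneg (hΦnn x), Real.norm_eq_abs,
      abs_of_nonneg (by positivity : (0:ℝ) ≤ 1 / Real.sqrt (2 * π))]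
    exact mul_le_mul_of_nonneg_left (hbound x hx0 hxr) (by positivity)
  have h2 : (fun x : ℝ => C * MN * |x| ^ N + D * (E x * |x|⁻¹))
      =O[𝓝[≠] (0:ℝ)] fun x : ℝ => x ^ N := by
    refine IsBigO.add ?_ ?_
    · rw [isBigO_iff]
      refine ⟨|C * MN|, Eventually.of_forall fun x => ?_⟩
      refine le_of_eq ?_
      simp [Real.norm_eq_abs, abs_mul, abs_pow, abs_abs]
    · have := (exp_decay_bigO (c := δ ^ 2 / 4) (by positivity) N).const_mul_left D
      rw [hEdef]
      exact this
  exact h1.trans h2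
end

section
/- Hankel's contour integral formula: ∫_γ (−z)^{u−1} e^{−z} dz = −2i sin(πu) Γ(u), where γ is a contour coming from +∞ above the positive real axis, encircling 0 counterclockwise, and returning to +∞ below the positive real axis, and (−z)^{u−1} uses the branch of log with cut along the positive real axis. -/
open Real Complex MeasureTheory Set Nat Filter

lemma hankel_integrableI (u : ℂ) :
    IntegrableOn (fun t : ℝ => (t : ℂ) ^ (u - 1) * Complex.exp (-(t : ℂ))) (Set.Ioi 1) := by
  have hm : ContinuousOn (fun t : ℝ => (t : ℂ) ^ (u - 1) * Complex.exp (-(t : ℂ))) (Set.Ioi 1) := by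
    apply ContinuousOn.mul
    · apply continuousOn_of_forall_continuousAt
      intro x hx
      exact (continuousAt_cpow_const <| Complex.ofReal_mem_slitPlane.2
        (lt_trans one_pos hx)).comp Complex.continuous_ofReal.continuousAt
    · fun_prop
  set s : ℝ := max u.re 1 with hs
  have hs0 : 0 < s := lt_of_lt_of_le one_pos (le_max_right _ _)
  refine Integrable.mono' (g := fun t : ℝ => Real.exp (-t) * t ^ (s - 1))
    (((Real.GammaIntegral_convergent hs0).mono_set (Set.Ioi_subset_Ioi zero_le_one)))
    (hm.aestronglyMeasurable measurableSet_Ioi) ?_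
  filter_upwards [ae_restrict_mem measurableSet_Ioi] with t ht
  have ht0 : (0 : ℝ) < t := lt_trans one_pos ht
  rw [norm_mul,
    Complex.norm_cpow_eq_rpow_re_of_pos ht0, Complex.norm_exp]
  simp only [Complex.sub_re, Complex.one_re, Complex.neg_re, Complex.ofReal_re]
  rw [mul_comm]
  gcongr
  · exact ht.le
  · simp [hs]

lemma hankel_summable_inv_factorial : Summable (fun n : ℕ => (1 : ℝ) / (n ! : ℝ)) := by
  simpa using Real.summable_pow_div_factorial 1

lemma hankel_summableS (u : ℂ) :
    Summable (fun n : ℕ => (-1 : ℂ) ^ n / ((n ! : ℂ) * (u + n))) := by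
  apply Summable.of_norm_bounded_eventually_nat (g := fun n : ℕ => (1 : ℝ) / (n ! : ℝ))
    hankel_summable_inv_factorial
  filter_upwards [Filter.eventually_ge_atTop (⌈‖u‖⌉₊ + 1)] with n hn
  have h1 : (1 : ℝ) ≤ ‖u + n‖ := by
    have hn' : (‖u‖ + 1 : ℝ) ≤ n := by
      calc ‖u‖ + 1 ≤ (⌈‖u‖⌉₊ : ℝ) + 1 := by gcongr; exact Nat.le_ceil _
      _ ≤ n := by exact_mod_cast hn
    have h2 : ‖(n : ℂ)‖ - ‖u + n‖ ≤ ‖u‖ := by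
      have h3 := norm_sub_norm_le (n : ℂ) (u + n)
      have h4 : (n : ℂ) - (u + n) = -u := by ring
      rw [h4, norm_neg] at h3
      exact h3
    rw [Complex.norm_natCast] at h2
    linarith
  rw [norm_div, norm_pow, norm_neg, norm_one, one_pow, norm_mul]
  apply one_div_le_one_div_of_le (by positivity)
  rw [Complex.norm_natCast]
  exact le_mul_of_one_le_right (by positivity) h1

lemma hankel_circle (u : ℂ) (hu : ∀ n : ℕ, u + (n : ℂ) ≠ 0) :
    (∫ θ in (0 : ℝ)..(2 * π),
        Complex.exp ((u - 1) * (((θ : ℂ) - (π : ℂ)) * Complex.I)) *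
          Complex.exp (-Complex.exp ((θ : ℂ) * Complex.I)) *
            (Complex.I * Complex.exp ((θ : ℂ) * Complex.I)))
      = (Complex.exp (-((π : ℂ) * u) * Complex.I) - Complex.exp (((π : ℂ) * u) * Complex.I)) *
          ∑' n : ℕ, (-1 : ℂ) ^ n / ((n ! : ℂ) * (u + n)) := by
  have hle : (0 : ℝ) ≤ 2 * π := by positivity
  set F : ℕ → ℝ → ℂ := fun n θ =>
    Complex.exp ((u - 1) * (((θ : ℂ) - (π : ℂ)) * Complex.I)) *
      ((-Complex.exp ((θ : ℂ) * Complex.I)) ^ n / (n ! : ℂ)) *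
        (Complex.I * Complex.exp ((θ : ℂ) * Complex.I)) with hF
  set C : ℕ → ℂ := fun n =>
    Complex.exp (-(u - 1) * (π : ℂ) * Complex.I) * ((-1 : ℂ) ^ n / (n ! : ℂ)) * Complex.I with hC
  have key : ∀ (n : ℕ) (θ : ℝ), F n θ = C n * Complex.exp (((u + n) * Complex.I) * (θ : ℂ)) := by
    intro n θ
    have e1 : (-Complex.exp ((θ : ℂ) * Complex.I)) ^ n
        = (-1 : ℂ) ^ n * Complex.exp ((n : ℂ) * ((θ : ℂ) * Complex.I)) := by
      rw [Complex.exp_nat_mul, neg_pow]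
    have e2 : Complex.exp ((u - 1) * (((θ : ℂ) - (π : ℂ)) * Complex.I))
        = Complex.exp (-(u - 1) * (π : ℂ) * Complex.I) *
            Complex.exp ((u - 1) * (θ : ℂ) * Complex.I) := by
      rw [← Complex.exp_add]; congr 1; ring
    have e3 : Complex.exp (((u + n) * Complex.I) * (θ : ℂ))
        = Complex.exp ((u - 1) * (θ : ℂ) * Complex.I) *
            Complex.exp ((n : ℂ) * ((θ : ℂ) * Complex.I)) * Complex.exp ((θ : ℂ) * Complex.I) := by
      rw [← Complex.exp_add, ← Complex.exp_add]; congr 1; ring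
    rw [hF, hC]
    simp only
    rw [e1, e2, e3]
    ring
  have hInt : ∀ n : ℕ, IntegrableOn (F n) (Ioc (0 : ℝ) (2 * π)) := by
    intro n
    have : Continuous (F n) := by
      have : Continuous fun θ : ℝ => C n * Complex.exp (((u + n) * Complex.I) * (θ : ℂ)) := by
        fun_prop
      exact this.congr (fun θ => (key n θ).symm)
    exact this.integrableOn_Ioc
  set K : ℝ := ‖(Complex.exp (-(u - 1) * (π : ℂ) * Complex.I))‖ with hK
  set M : ℝ := Real.exp (|u.im| * (2 * π)) with hM
  have hnormC : ∀ n : ℕ, ‖C n‖ = K * (1 / (n ! : ℝ)) := by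
    intro n
    rw [hC]
    simp only
    rw [norm_mul, norm_mul, norm_div, norm_pow, norm_neg, norm_one, one_pow,
      Complex.norm_I, Complex.norm_natCast, mul_one, hK]
  have hbound : ∀ n : ℕ, ∀ θ ∈ Ioc (0 : ℝ) (2 * π), ‖F n θ‖ ≤ K * M * (1 / (n ! : ℝ)) := by
    intro n θ hθ
    rw [key n θ, norm_mul, hnormC]
    have h1 : ‖Complex.exp ((u + n) * Complex.I * (θ : ℂ))‖ ≤ M := by
      rw [Complex.norm_exp, hM]
      apply Real.exp_le_exp.2
      have : ((u + n) * Complex.I * (θ : ℂ)).re = -(u.im * θ) := by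
        simp [Complex.mul_re, Complex.mul_im]
      rw [this]
      have h2 := hθ.1.le
      have h3 := hθ.2
      nlinarith [le_abs_self u.im, neg_abs_le u.im, pi_pos]
    calc K * (1 / (n ! : ℝ)) * ‖Complex.exp ((u + n) * Complex.I * (θ : ℂ))‖
        ≤ K * (1 / (n ! : ℝ)) * M := by
          gcongr
      _ = K * M * (1 / (n ! : ℝ)) := by ring
  have hSum : Summable fun n : ℕ => ∫ θ in Ioc (0 : ℝ) (2 * π), ‖F n θ‖ := by
    apply Summable.of_nonneg_of_le
      (fun n => integral_nonneg fun θ => norm_nonneg _)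
      (fun n => ?_) (((hankel_summable_inv_factorial).mul_left (K * M * (2 * π))))
    calc (∫ θ in Ioc (0 : ℝ) (2 * π), ‖F n θ‖)
        ≤ ∫ _ in Ioc (0 : ℝ) (2 * π), K * M * (1 / (n ! : ℝ)) := by
          apply setIntegral_mono_on (hInt n).norm (integrableOn_const (by
            rw [Real.volume_Ioc]; exact ENNReal.ofReal_ne_top)) measurableSet_Ioc
          exact hbound n
      _ = (2 * π) * (K * M * (1 / (n ! : ℝ))) := by
          rw [setIntegral_const, Real.volume_real_Ioc_of_le hle, sub_zero, smul_eq_mul]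
      _ = K * M * (2 * π) * (1 / (n ! : ℝ)) := by ring
  have hpoint : ∀ θ ∈ Ioc (0 : ℝ) (2 * π),
      Complex.exp ((u - 1) * (((θ : ℂ) - (π : ℂ)) * Complex.I)) *
          Complex.exp (-Complex.exp ((θ : ℂ) * Complex.I)) *
            (Complex.I * Complex.exp ((θ : ℂ) * Complex.I)) = ∑' n : ℕ, F n θ := by
    intro θ _
    have hexp : Complex.exp (-Complex.exp ((θ : ℂ) * Complex.I))
        = ∑' n : ℕ, (-Complex.exp ((θ : ℂ) * Complex.I)) ^ n / (n ! : ℂ) := by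
      rw [Complex.exp_eq_exp_ℂ, NormedSpace.exp_eq_tsum_div]
    rw [hexp, ← tsum_mul_left, ← tsum_mul_right]
  have hterm : ∀ n : ℕ, (∫ θ in Ioc (0 : ℝ) (2 * π), F n θ)
      = C n * ((Complex.exp (2 * (π : ℂ) * u * Complex.I) - 1) / ((u + n) * Complex.I)) := by
    intro n
    have hc : (u + (n : ℂ)) * Complex.I ≠ 0 := mul_ne_zero (hu n) Complex.I_ne_zero
    calc (∫ θ in Ioc (0 : ℝ) (2 * π), F n θ)
        = ∫ θ in (0 : ℝ)..(2 * π), C n * Complex.exp (((u + n) * Complex.I) * (θ : ℂ)) := by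
          rw [intervalIntegral.integral_of_le hle]
          exact setIntegral_congr_fun measurableSet_Ioc fun θ _ => key n θ
      _ = C n * ∫ θ in (0 : ℝ)..(2 * π), Complex.exp (((u + n) * Complex.I) * (θ : ℂ)) :=
          intervalIntegral.integral_const_mul _ _
      _ = C n * ((Complex.exp (2 * (π : ℂ) * u * Complex.I) - 1) / ((u + n) * Complex.I)) := by
          rw [integral_exp_mul_complex hc]
          congr 1
          have ha : (u + (n : ℂ)) * Complex.I * ((2 * π : ℝ) : ℂ)
              = 2 * (π : ℂ) * u * Complex.I + (n : ℤ) * (2 * (π : ℂ) * Complex.I) := by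
            push_cast; ring
          have hb : (u + (n : ℂ)) * Complex.I * ((0 : ℝ) : ℂ) = 0 := by
            push_cast; ring
          rw [ha, hb, Complex.exp_add, Complex.exp_int_mul_two_pi_mul_I, mul_one,
            Complex.exp_zero]
  have hfinal : ∀ n : ℕ,
      C n * ((Complex.exp (2 * (π : ℂ) * u * Complex.I) - 1) / ((u + n) * Complex.I))
        = (Complex.exp (-((π : ℂ) * u) * Complex.I) - Complex.exp (((π : ℂ) * u) * Complex.I)) *
            ((-1 : ℂ) ^ n / ((n ! : ℂ) * (u + n))) := by
    intro n
    have h1 : Complex.exp (-(u - 1) * (π : ℂ) * Complex.I)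
        = -Complex.exp (-((π : ℂ) * u) * Complex.I) := by
      rw [show -(u - 1) * (π : ℂ) * Complex.I
          = -((π : ℂ) * u) * Complex.I + (π : ℂ) * Complex.I from by ring,
        Complex.exp_add, Complex.exp_pi_mul_I]
      ring
    have h2 : Complex.exp (2 * (π : ℂ) * u * Complex.I)
        = Complex.exp (((π : ℂ) * u) * Complex.I) * Complex.exp (((π : ℂ) * u) * Complex.I) := by
      rw [← Complex.exp_add]; congr 1; ring
    have h3 : Complex.exp (-((π : ℂ) * u) * Complex.I) * Complex.exp (((π : ℂ) * u) * Complex.I)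
        = 1 := by
      rw [← Complex.exp_add]
      norm_num
    have h5 : -Complex.exp (-((π : ℂ) * u) * Complex.I) *
        (Complex.exp (((π : ℂ) * u) * Complex.I) * Complex.exp (((π : ℂ) * u) * Complex.I) - 1)
          = Complex.exp (-((π : ℂ) * u) * Complex.I) - Complex.exp (((π : ℂ) * u) * Complex.I) := by
      linear_combination (-Complex.exp (((π : ℂ) * u) * Complex.I)) * h3
    have h6 : Complex.I / ((u + (n : ℂ)) * Complex.I) = 1 / (u + (n : ℂ)) := by
      rw [mul_comm, ← div_div, div_self Complex.I_ne_zero]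
    rw [hC]
    simp only
    rw [h1, h2]
    calc -Complex.exp (-((π : ℂ) * u) * Complex.I) * ((-1 : ℂ) ^ n / (n ! : ℂ)) * Complex.I *
          ((Complex.exp (((π : ℂ) * u) * Complex.I) * Complex.exp (((π : ℂ) * u) * Complex.I) - 1)
            / ((u + (n : ℂ)) * Complex.I))
        = (-Complex.exp (-((π : ℂ) * u) * Complex.I) *
            (Complex.exp (((π : ℂ) * u) * Complex.I) * Complex.exp (((π : ℂ) * u) * Complex.I) - 1))
              * ((-1 : ℂ) ^ n / (n ! : ℂ)) * (Complex.I / ((u + (n : ℂ)) * Complex.I)) := by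
          ring
      _ = (Complex.exp (-((π : ℂ) * u) * Complex.I) - Complex.exp (((π : ℂ) * u) * Complex.I))
            * ((-1 : ℂ) ^ n / (n ! : ℂ)) * (1 / (u + (n : ℂ))) := by rw [h5, h6]
      _ = (Complex.exp (-((π : ℂ) * u) * Complex.I) - Complex.exp (((π : ℂ) * u) * Complex.I)) *
            ((-1 : ℂ) ^ n / ((n ! : ℂ) * (u + n))) := by
          rw [mul_assoc, _root_.div_mul_div_comm, mul_one]
  calc (∫ θ in (0 : ℝ)..(2 * π),
        Complex.exp ((u - 1) * (((θ : ℂ) - (π : ℂ)) * Complex.I)) *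
          Complex.exp (-Complex.exp ((θ : ℂ) * Complex.I)) *
            (Complex.I * Complex.exp ((θ : ℂ) * Complex.I)))
      = ∫ θ in Ioc (0 : ℝ) (2 * π), ∑' n : ℕ, F n θ := by
        rw [intervalIntegral.integral_of_le hle]
        exact setIntegral_congr_fun measurableSet_Ioc hpoint
    _ = ∑' n : ℕ, ∫ θ in Ioc (0 : ℝ) (2 * π), F n θ :=
        (integral_tsum_of_summable_integral_norm (fun n => hInt n) hSum).symm
    _ = ∑' n : ℕ, (Complex.exp (-((π : ℂ) * u) * Complex.I) -
          Complex.exp (((π : ℂ) * u) * Complex.I)) * ((-1 : ℂ) ^ n / ((n ! : ℂ) * (u + n))) := by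
        exact tsum_congr fun n => by rw [hterm n, hfinal n]
    _ = (Complex.exp (-((π : ℂ) * u) * Complex.I) - Complex.exp (((π : ℂ) * u) * Complex.I)) *
          ∑' n : ℕ, (-1 : ℂ) ^ n / ((n ! : ℂ) * (u + n)) := tsum_mul_left

lemma hankel_ML_pos {u : ℂ} (hre : 0 < u.re) :
    Complex.Gamma u = (∑' n : ℕ, (-1 : ℂ) ^ n / ((n ! : ℂ) * (u + n))) +
      ∫ t in Set.Ioi (1 : ℝ), (t : ℂ) ^ (u - 1) * Complex.exp (-(t : ℂ)) := by
  have hadd : ∀ n : ℕ, u + (n : ℂ) ≠ 0 := by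
    intro n h
    have h2 : (u + (n : ℂ)).re = 0 := by rw [h]; simp
    simp only [Complex.add_re, Complex.natCast_re] at h2
    have h3 : (0 : ℝ) ≤ (n : ℝ) := n.cast_nonneg
    linarith
  set G : ℕ → ℝ → ℂ := fun n x => (x : ℂ) ^ (u - 1) * ((-(x : ℂ)) ^ n / (n ! : ℂ)) with hG
  have hGeq : ∀ n : ℕ, ∀ x ∈ Ioc (0 : ℝ) 1,
      G n x = ((-1 : ℂ) ^ n / (n ! : ℂ)) * (x : ℂ) ^ (u - 1 + n) := by
    intro n x hx
    have hx0 : (x : ℂ) ≠ 0 := Complex.ofReal_ne_zero.2 hx.1.ne'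
    rw [hG]
    simp only
    rw [neg_pow, Complex.cpow_add _ _ hx0, Complex.cpow_natCast]
    ring
  have hre' : ∀ n : ℕ, (-1 : ℝ) < (u - 1 + n).re := by
    intro n
    simp only [Complex.add_re, Complex.sub_re, Complex.one_re, Complex.natCast_re]
    have : (0 : ℝ) ≤ (n : ℝ) := n.cast_nonneg
    linarith
  have hGint : ∀ n : ℕ, IntegrableOn (G n) (Ioc (0 : ℝ) 1) := by
    intro n
    apply IntegrableOn.congr_fun _ (fun x hx => (hGeq n x hx).symm) measurableSet_Ioc
    exact ((intervalIntegral.intervalIntegrable_cpow' (hre' n)).const_mul _).1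
  have hg0 : IntegrableOn (fun x : ℝ => x ^ (u.re - 1)) (Ioc (0 : ℝ) 1) :=
    (intervalIntegral.intervalIntegrable_rpow' (by linarith)).1
  have hSum : Summable fun n : ℕ => ∫ x in Ioc (0 : ℝ) 1, ‖G n x‖ := by
    apply Summable.of_nonneg_of_le (fun n => integral_nonneg fun x => norm_nonneg _)
      (fun n => ?_) (hankel_summable_inv_factorial.mul_right (∫ x in Ioc (0 : ℝ) 1, x ^ (u.re - 1)))
    calc (∫ x in Ioc (0 : ℝ) 1, ‖G n x‖)
        ≤ ∫ x in Ioc (0 : ℝ) 1, (1 / (n ! : ℝ)) * x ^ (u.re - 1) := by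
          apply setIntegral_mono_on (hGint n).norm (hg0.const_mul _) measurableSet_Ioc
          intro x hx
          rw [hG]
          simp only
          rw [norm_mul, norm_div, norm_pow, norm_neg,
            Complex.norm_cpow_eq_rpow_re_of_pos hx.1, Complex.norm_real,
            Real.norm_eq_abs, abs_of_pos hx.1, Complex.norm_natCast]
          simp only [Complex.sub_re, Complex.one_re]
          have hxn : x ^ n ≤ 1 := pow_le_one₀ hx.1.le hx.2
          have hrp : (0 : ℝ) ≤ x ^ (u.re - 1) := Real.rpow_nonneg hx.1.le _
          have hfp : (0 : ℝ) < (n ! : ℝ) := by positivity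
          calc x ^ (u.re - 1) * (x ^ n / (n ! : ℝ))
              ≤ x ^ (u.re - 1) * (1 / (n ! : ℝ)) := by gcongr
            _ = 1 / (n ! : ℝ) * x ^ (u.re - 1) := by ring
      _ = (1 / (n ! : ℝ)) * ∫ x in Ioc (0 : ℝ) 1, x ^ (u.re - 1) := by
          rw [MeasureTheory.integral_const_mul]
  have hterm : ∀ n : ℕ, (∫ x in Ioc (0 : ℝ) 1, G n x)
      = (-1 : ℂ) ^ n / ((n ! : ℂ) * (u + n)) := by
    intro n
    have h1 : u - 1 + n + 1 = u + n := by ring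
    calc (∫ x in Ioc (0 : ℝ) 1, G n x)
        = ∫ x in Ioc (0 : ℝ) 1, ((-1 : ℂ) ^ n / (n ! : ℂ)) * (x : ℂ) ^ (u - 1 + n) :=
          setIntegral_congr_fun measurableSet_Ioc (hGeq n)
      _ = ((-1 : ℂ) ^ n / (n ! : ℂ)) * ∫ x in (0 : ℝ)..1, (x : ℂ) ^ (u - 1 + n) := by
          rw [← intervalIntegral.integral_of_le zero_le_one,
            intervalIntegral.integral_const_mul]
      _ = (-1 : ℂ) ^ n / ((n ! : ℂ) * (u + n)) := by
          rw [integral_cpow (Or.inl (hre' n)), h1]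
          push_cast
          rw [Complex.one_cpow, Complex.zero_cpow (hadd n), sub_zero,
            _root_.div_mul_div_comm, mul_one]
  have hpoint : ∀ x ∈ Ioc (0 : ℝ) 1,
      (Real.exp (-x) : ℂ) * (x : ℂ) ^ (u - 1) = ∑' n : ℕ, G n x := by
    intro x _
    have hexp : ((Real.exp (-x) : ℝ) : ℂ) = Complex.exp (-(x : ℂ)) := by
      rw [← Complex.ofReal_neg, Complex.ofReal_exp]
    have htsum : Complex.exp (-(x : ℂ)) = ∑' n : ℕ, (-(x : ℂ)) ^ n / (n ! : ℂ) := by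
      rw [Complex.exp_eq_exp_ℂ, NormedSpace.exp_eq_tsum_div]
    rw [hexp, htsum, mul_comm, ← tsum_mul_left]
  rw [Complex.Gamma_eq_integral hre]
  unfold Complex.GammaIntegral
  rw [show Ioi (0 : ℝ) = Ioc (0 : ℝ) 1 ∪ Ioi (1 : ℝ) from (Set.Ioc_union_Ioi_eq_Ioi zero_le_one).symm]
  rw [setIntegral_union (Set.Ioc_disjoint_Ioi le_rfl) measurableSet_Ioi
    ((Complex.GammaIntegral_convergent hre).mono_set Set.Ioc_subset_Ioi_self)
    ((Complex.GammaIntegral_convergent hre).mono_set (Set.Ioi_subset_Ioi zero_le_one))]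
  congr 1
  · rw [setIntegral_congr_fun measurableSet_Ioc hpoint,
      ← integral_tsum_of_summable_integral_norm hGint hSum]
    exact tsum_congr hterm
  · apply setIntegral_congr_fun measurableSet_Ioi
    intro x _
    dsimp only
    rw [mul_comm, ← Complex.ofReal_neg, Complex.ofReal_exp]

lemma hankel_I_rec (u : ℂ) (hu0 : u ≠ 0) :
    u * (∫ t in Set.Ioi (1 : ℝ), (t : ℂ) ^ (u - 1) * Complex.exp (-(t : ℂ)))
      = (∫ t in Set.Ioi (1 : ℝ), (t : ℂ) ^ (u + 1 - 1) * Complex.exp (-(t : ℂ)))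
          - Complex.exp (-1) := by
  have hI2 : IntegrableOn (fun t : ℝ => (t : ℂ) ^ (u + 1 - 1) * Complex.exp (-(t : ℂ)))
      (Set.Ioi 1) := hankel_integrableI (u + 1)
  have hI2' : IntegrableOn (fun t : ℝ => (t : ℂ) ^ u / u * Complex.exp (-(t : ℂ)))
      (Set.Ioi 1) := by
    apply MeasureTheory.IntegrableOn.congr_fun (hI2.div_const u) _ measurableSet_Ioi
    intro x _
    simp only [add_sub_cancel_right]
    ring
  have hderiv : ∀ x ∈ Ici (1 : ℝ),
      HasDerivAt (fun t : ℝ => (t : ℂ) ^ u / u * Complex.exp (-(t : ℂ)))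
        ((x : ℂ) ^ (u - 1) * Complex.exp (-(x : ℂ))
          - (x : ℂ) ^ u / u * Complex.exp (-(x : ℂ))) x := by
    intro x hx
    have hx0 : x ≠ 0 := by intro h; rw [h] at hx; norm_num at hx
    have h1 : HasDerivAt (fun t : ℝ => (t : ℂ) ^ u / u) ((x : ℂ) ^ (u - 1)) x := by
      have := hasDerivAt_ofReal_cpow_const' hx0 (r := u - 1)
        (by intro h; apply hu0; linear_combination h)
      simpa using this
    have h2 : HasDerivAt (fun t : ℝ => Complex.exp (-(t : ℂ))) (-Complex.exp (-(x : ℂ))) x := by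
      have h3 : HasDerivAt (fun z : ℂ => Complex.exp (-z)) (-Complex.exp (-(x : ℂ))) (x : ℂ) := by
        exact ((Complex.hasDerivAt_exp (-(x : ℂ))).comp (x : ℂ)
          ((hasDerivAt_id ((x : ℂ))).neg)).congr_deriv (by simp)
      exact h3.comp_ofReal
    have : HasDerivAt (fun t : ℝ => (t : ℂ) ^ u / u * Complex.exp (-(t : ℂ))) _ x := h1.mul h2
    convert this using 1
    ring
  have htend : Tendsto (fun t : ℝ => (t : ℂ) ^ u / u * Complex.exp (-(t : ℂ))) atTop (nhds 0) := by
    apply squeeze_zero_norm'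
      (a := fun t : ℝ => t ^ u.re * Real.exp (-(1 * t)) / ‖u‖)
      ?_ (by simpa using
        (tendsto_rpow_mul_exp_neg_mul_atTop_nhds_zero u.re 1 one_pos).div_const ‖u‖)
    filter_upwards [Filter.eventually_gt_atTop (0 : ℝ)] with t ht
    apply le_of_eq
    rw [norm_mul, norm_div,
      Complex.norm_cpow_eq_rpow_re_of_pos ht,
      Complex.norm_exp]
    simp only [Complex.neg_re, Complex.ofReal_re, one_mul]
    rw [div_mul_eq_mul_div]
  have hfint : IntegrableOn (fun x : ℝ => (x : ℂ) ^ (u - 1) * Complex.exp (-(x : ℂ))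
      - (x : ℂ) ^ u / u * Complex.exp (-(x : ℂ))) (Set.Ioi 1) :=
    (hankel_integrableI u).sub hI2'
  have key := integral_Ioi_of_hasDerivAt_of_tendsto' hderiv hfint htend
  rw [MeasureTheory.integral_sub (hankel_integrableI u) hI2'] at key
  have h4 : (∫ t in Set.Ioi (1 : ℝ), (t : ℂ) ^ u / u * Complex.exp (-(t : ℂ)))
      = (∫ t in Set.Ioi (1 : ℝ), (t : ℂ) ^ (u + 1 - 1) * Complex.exp (-(t : ℂ))) / u := by
    rw [← integral_div]
    apply setIntegral_congr_fun measurableSet_Ioi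
    intro x _
    simp only [add_sub_cancel_right]
    ring
  rw [h4] at key
  have h5 : ((1 : ℝ) : ℂ) ^ u / u * Complex.exp (-((1 : ℝ) : ℂ)) = Complex.exp (-1) / u := by
    push_cast
    rw [Complex.one_cpow]
    ring
  rw [h5, zero_sub] at key
  have h6 : (∫ t in Set.Ioi (1 : ℝ), (t : ℂ) ^ (u + 1 - 1) * Complex.exp (-(t : ℂ)))
      = ∫ t in Set.Ioi (1 : ℝ), (t : ℂ) ^ u * Complex.exp (-(t : ℂ)) :=
    setIntegral_congr_fun measurableSet_Ioi (fun x _ => by rw [add_sub_cancel_right])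
  rw [h6]
  field_simp at key
  linear_combination key + h6

lemma hankel_S_rec (u : ℂ) (hu : ∀ n : ℕ, u + (n : ℂ) ≠ 0) :
    u * ∑' n : ℕ, (-1 : ℂ) ^ n / ((n ! : ℂ) * (u + n))
      = Complex.exp (-1) + ∑' n : ℕ, (-1 : ℂ) ^ n / ((n ! : ℂ) * (u + 1 + n)) := by
  have hu' : ∀ n : ℕ, u + 1 + (n : ℂ) ≠ 0 := by
    intro n h
    apply hu (n + 1)
    push_cast
    linear_combination h
  set c : ℕ → ℂ := fun n => (-1 : ℂ) ^ n * n / ((n ! : ℂ) * (u + n)) with hc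
  have hcs : ∀ m : ℕ, c (m + 1) = -((-1 : ℂ) ^ m / ((m ! : ℂ) * (u + 1 + m))) := by
    intro m
    rw [hc]
    simp only
    rw [Nat.factorial_succ]
    have h1 : ((m + 1 : ℕ) : ℂ) ≠ 0 := Nat.cast_ne_zero.2 (Nat.succ_ne_zero m)
    have h2 : ((m !  : ℕ) : ℂ) ≠ 0 := Nat.cast_ne_zero.2 m.factorial_ne_zero
    have h3 : u + ((m + 1 : ℕ) : ℂ) ≠ 0 := hu (m + 1)
    have h4 : u + 1 + (m : ℂ) ≠ 0 := hu' m
    push_cast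
    have h3' : u + ((m : ℂ) + 1) ≠ 0 := by
      rw [show u + ((m : ℂ) + 1) = u + 1 + (m : ℂ) from by ring]; exact h4
    have hm1 : ((m : ℂ) + 1) ≠ 0 := by push_cast at h1; exact h1
    rw [← neg_div, div_eq_div_iff (by exact mul_ne_zero (mul_ne_zero hm1 h2) h3')
      (mul_ne_zero h2 h4)]
    ring
  have hsc : Summable c := by
    rw [← summable_nat_add_iff 1]
    apply Summable.congr ((hankel_summableS (u + 1)).neg)
    intro m
    rw [hcs m]
  have ha : Summable (fun n : ℕ => (-1 : ℂ) ^ n / (n ! : ℂ)) := by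
    apply Summable.of_norm
    apply Summable.congr (Real.summable_pow_div_factorial 1)
    intro n
    simp
  have key : ∀ n : ℕ, u * ((-1 : ℂ) ^ n / ((n ! : ℂ) * (u + n)))
      = (-1 : ℂ) ^ n / (n ! : ℂ) - c n := by
    intro n
    rw [hc]
    simp only
    have h2 : ((n ! : ℕ) : ℂ) ≠ 0 := Nat.cast_ne_zero.2 n.factorial_ne_zero
    field_simp [hu n]
    ring
  calc u * ∑' n : ℕ, (-1 : ℂ) ^ n / ((n ! : ℂ) * (u + n))
      = ∑' n : ℕ, u * ((-1 : ℂ) ^ n / ((n ! : ℂ) * (u + n))) := tsum_mul_left.symm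
    _ = ∑' n : ℕ, ((-1 : ℂ) ^ n / (n ! : ℂ) - c n) := tsum_congr key
    _ = (∑' n : ℕ, (-1 : ℂ) ^ n / (n ! : ℂ)) - ∑' n : ℕ, c n := Summable.tsum_sub ha hsc
    _ = Complex.exp (-1) + ∑' n : ℕ, (-1 : ℂ) ^ n / ((n ! : ℂ) * (u + 1 + n)) := by
        have he : Complex.exp (-1) = ∑' n : ℕ, (-1 : ℂ) ^ n / (n ! : ℂ) := by
          rw [Complex.exp_eq_exp_ℂ, NormedSpace.exp_eq_tsum_div]
        have hcsum : ∑' n : ℕ, c n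
            = -∑' n : ℕ, (-1 : ℂ) ^ n / ((n ! : ℂ) * (u + 1 + n)) := by
          rw [Summable.tsum_eq_zero_add hsc]
          have hc0 : c 0 = 0 := by rw [hc]; simp
          rw [hc0, zero_add]
          rw [tsum_congr hcs, tsum_neg]
        rw [he, hcsum]
        ring


lemma hankel_ML (u : ℂ) (hu : ∀ n : ℕ, u + (n : ℂ) ≠ 0) :
    Complex.Gamma u = (∑' n : ℕ, (-1 : ℂ) ^ n / ((n ! : ℂ) * (u + n))) +
      ∫ t in Set.Ioi (1 : ℝ), (t : ℂ) ^ (u - 1) * Complex.exp (-(t : ℂ)) := by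
  obtain ⟨N, hN⟩ : ∃ N : ℕ, 0 < u.re + N := by
    refine ⟨⌊|u.re|⌋₊ + 1, ?_⟩
    push_cast
    have h1 := Nat.lt_floor_add_one |u.re|
    have h2 := neg_abs_le u.re
    linarith
  induction N generalizing u with
  | zero => exact hankel_ML_pos (by simpa using hN)
  | succ n ih =>
    by_cases h : 0 < u.re + n
    · exact ih u hu h
    · have hu0 : u ≠ 0 := by simpa using hu 0
      have hu' : ∀ k : ℕ, u + 1 + (k : ℂ) ≠ 0 := by
        intro k hk
        apply hu (k + 1)
        push_cast
        linear_combination hk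
      have hrec1 := hankel_I_rec u hu0
      have hrec2 := hankel_S_rec u hu
      have hG := Complex.Gamma_add_one u hu0
      have hih := ih (u + 1) hu' (by
        simp only [Complex.add_re, Complex.one_re]
        push_cast at hN ⊢
        linarith)
      apply mul_left_cancel₀ hu0
      have hSrw : ∑' k : ℕ, (-1 : ℂ) ^ k / ((k ! : ℂ) * (u + 1 + k))
          = ∑' k : ℕ, (-1 : ℂ) ^ k / ((k ! : ℂ) * (u + 1 + k)) := rfl
      linear_combination (-1 : ℂ) * hG + hih - hrec2 - hrec1

/-- Hankel's contour integral formula: `∫_γ (−z)^{u−1} e^{−z} dz = −2i sin(πu) Γ(u)`,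
where `γ` comes from `+∞` just above the positive real axis, encircles `0`
counterclockwise (here along the unit circle), and returns to `+∞` just below
the positive real axis, and `(−z)^{u−1}` uses the branch of `log` with cut along
the positive real axis: on the incoming ray `arg(−z) = −π`, on the circle
`z = e^{iθ}` (`θ` from `0` to `2π`) we have `(−z)^{u−1} = e^{(u−1)(θ−π)i}`, and
on the outgoing ray `arg(−z) = π`. -/
theorem hankel_contour_integral (u : ℂ) (hu : ∀ n : ℕ, u ≠ -(n : ℂ)) :
    (-∫ t in Set.Ioi (1 : ℝ),
        Complex.exp (-(u - 1) * (π : ℂ) * Complex.I) * (t : ℂ) ^ (u - 1) *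
          Complex.exp (-(t : ℂ))) +
      (∫ θ in (0 : ℝ)..(2 * π),
        Complex.exp ((u - 1) * (((θ : ℂ) - (π : ℂ)) * Complex.I)) *
          Complex.exp (-Complex.exp ((θ : ℂ) * Complex.I)) *
            (Complex.I * Complex.exp ((θ : ℂ) * Complex.I))) +
      (∫ t in Set.Ioi (1 : ℝ),
        Complex.exp ((u - 1) * (π : ℂ) * Complex.I) * (t : ℂ) ^ (u - 1) *
          Complex.exp (-(t : ℂ))) =
    -2 * Complex.I * Complex.sin ((π : ℂ) * u) * Complex.Gamma u := by
  have hu' : ∀ n : ℕ, u + (n : ℂ) ≠ 0 := fun n h => hu n (eq_neg_of_add_eq_zero_left h)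
  have h1 : (∫ t in Set.Ioi (1 : ℝ),
      Complex.exp (-(u - 1) * (π : ℂ) * Complex.I) * (t : ℂ) ^ (u - 1) *
        Complex.exp (-(t : ℂ)))
      = Complex.exp (-(u - 1) * (π : ℂ) * Complex.I) *
          ∫ t in Set.Ioi (1 : ℝ), (t : ℂ) ^ (u - 1) * Complex.exp (-(t : ℂ)) := by
    rw [← MeasureTheory.integral_const_mul]
    exact MeasureTheory.setIntegral_congr_fun measurableSet_Ioi fun x _ => by ring
  have h2 : (∫ t in Set.Ioi (1 : ℝ),
      Complex.exp ((u - 1) * (π : ℂ) * Complex.I) * (t : ℂ) ^ (u - 1) *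
        Complex.exp (-(t : ℂ)))
      = Complex.exp ((u - 1) * (π : ℂ) * Complex.I) *
          ∫ t in Set.Ioi (1 : ℝ), (t : ℂ) ^ (u - 1) * Complex.exp (-(t : ℂ)) := by
    rw [← MeasureTheory.integral_const_mul]
    exact MeasureTheory.setIntegral_congr_fun measurableSet_Ioi fun x _ => by ring
  rw [h1, h2, hankel_circle u hu', hankel_ML u hu']
  have hnegpi : Complex.exp (-(π : ℂ) * Complex.I) = -1 := by
    rw [show -(π : ℂ) * Complex.I = -((π : ℂ) * Complex.I) from by ring, Complex.exp_neg,
      Complex.exp_pi_mul_I]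
    norm_num
  have e2 : Complex.exp (-(u - 1) * (π : ℂ) * Complex.I)
      = -Complex.exp (-((π : ℂ) * u) * Complex.I) := by
    rw [show -(u - 1) * (π : ℂ) * Complex.I
        = -((π : ℂ) * u) * Complex.I + (π : ℂ) * Complex.I from by ring,
      Complex.exp_add, Complex.exp_pi_mul_I]
    ring
  have e3 : Complex.exp ((u - 1) * (π : ℂ) * Complex.I)
      = -Complex.exp (((π : ℂ) * u) * Complex.I) := by
    rw [show (u - 1) * (π : ℂ) * Complex.I
        = ((π : ℂ) * u) * Complex.I + -(π : ℂ) * Complex.I from by ring,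
      Complex.exp_add, hnegpi]
    ring
  have haux2 : -2 * Complex.I * Complex.sin ((π : ℂ) * u)
      = Complex.exp (-((π : ℂ) * u) * Complex.I) - Complex.exp (((π : ℂ) * u) * Complex.I) := by
    rw [Complex.sin]
    have hI : Complex.I * Complex.I = -1 := Complex.I_mul_I
    linear_combination (-(Complex.exp (-((π : ℂ) * u) * Complex.I) -
      Complex.exp (((π : ℂ) * u) * Complex.I))) * hI
  rw [e2, e3, haux2]
  ring
end
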